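/- Consider the BPP description with variables {X, Y, Z, A}, actions {τ, a, b} and rules X →τ Y, X →τ XA, X →b Z, Y →b ε, Y →τ YA, Z →τ ε, Z →τ ZA, A →τ ε, A →a ε. Then X ≈^L_ω Y (X and Y are related by the long-long approximant at level ω) but X ≉ Y; consequently long-long approximants do not stabilize at level ω for BPP. -/

import Mathlib

/-- A Basic Parallel Processes description: finitely many variables, finitely many
actions (with a distinguished silent action `tau`) and finitely many rules. -/
structure BPP where
  V : Type
  Act : Type
  finV : Finite V
  finAct : Finite Act
  tau : Act
  T : Set (V × Act × Multiset V)
  finT : T.Finite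

namespace BPP

variable (B : BPP)

/-- Processes are multisets of variables. -/
abbrev Proc (B : BPP) : Type := Multiset B.V

/-- The strong step relation `α →a β`. -/
def Step (a : B.Act) (α β : B.Proc) : Prop :=
  ∃ X γ δ, (X, a, γ) ∈ B.T ∧ α = X ::ₘ δ ∧ β = γ + δ

/-- `α ⇒τ β`: the reflexive–transitive closure of silent steps. -/
def WTau : B.Proc → B.Proc → Prop :=
  Relation.ReflTransGen (B.Step B.tau)

/-- The weak step relation `α ⇒a β`. -/
def WStep (a : B.Act) (α β : B.Proc) : Prop :=
  (a = B.tau ∧ B.WTau α β) ∨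
  (a ≠ B.tau ∧ ∃ γ δ, B.WTau α γ ∧ B.Step a γ δ ∧ B.WTau δ β)

/-- Weak steps along a word `w ∈ Act*`. -/
def WWord : List B.Act → B.Proc → B.Proc → Prop
  | [] => B.WTau
  | a :: w => fun α β => ∃ γ, B.WStep a α γ ∧ WWord w γ β

/-- A weak bisimulation. -/
def IsWeakBisim (R : B.Proc → B.Proc → Prop) : Prop :=
  Symmetric R ∧
    ∀ α β, R α β → ∀ a α', B.Step a α α' → ∃ β', B.WStep a β β' ∧ R α' β'

/-- Weak bisimilarity `α ≈ β`. -/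
def WBisim (α β : B.Proc) : Prop :=
  ∃ R, B.IsWeakBisim R ∧ R α β

/-- Refinement function for the short-long approximants: `Ψ(R)` is the largest
symmetric relation such that every strong attack is answered by a weak step into `R`. -/
def RefSL (R : B.Proc → B.Proc → Prop) (α β : B.Proc) : Prop :=
  (∀ a α', B.Step a α α' → ∃ β', B.WStep a β β' ∧ R α' β') ∧
  (∀ a β', B.Step a β β' → ∃ α', B.WStep a α α' ∧ R α' β')

/-- Refinement function for the long-long approximants: weak attacks, weak responses. -/
def RefLL (R : B.Proc → B.Proc → Prop) (α β : B.Proc) : Prop :=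
  (∀ a α', B.WStep a α α' → ∃ β', B.WStep a β β' ∧ R α' β') ∧
  (∀ a β', B.WStep a β β' → ∃ α', B.WStep a α α' ∧ R α' β')

/-- Refinement function for the word approximants: attacks along words, responses
along the same word. -/
def RefW (R : B.Proc → B.Proc → Prop) (α β : B.Proc) : Prop :=
  (∀ w α', B.WWord w α α' → ∃ β', B.WWord w β β' ∧ R α' β') ∧
  (∀ w β', B.WWord w β β' → ∃ α', B.WWord w α α' ∧ R α' β')

/-- Refinement function for the Parikh approximants: attacks along words, responses
along any word with the same Parikh image (multiset of letters). -/
def RefP (R : B.Proc → B.Proc → Prop) (α β : B.Proc) : Prop :=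
  (∀ w α', B.WWord w α α' →
    ∃ (w' : List B.Act) (β' : B.Proc), (↑w' : Multiset B.Act) = ↑w ∧ B.WWord w' β β' ∧ R α' β') ∧
  (∀ w β', B.WWord w β β' →
    ∃ (w' : List B.Act) (α' : B.Proc), (↑w' : Multiset B.Act) = ↑w ∧ B.WWord w' α α' ∧ R α' β')

/-- Approximants by transfinite recursion: `≈₀` is the full relation,
`≈_{i+1} = Ψ(≈_i)` and `≈_λ = ⋂_{i<λ} ≈_i` at limit ordinals. -/
noncomputable def Approx (F : (B.Proc → B.Proc → Prop) → (B.Proc → B.Proc → Prop))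
    (o : Ordinal) : B.Proc → B.Proc → Prop :=
  Ordinal.limitRecOn o (fun _ _ => True) (fun _ R => F R)
    (fun _ _ ih α β => ∀ i hi, ih i hi α β)

/-- A deadlock: no visible step is possible. -/
def Deadlock (α : B.Proc) : Prop :=
  ∀ a α', B.Step a α α' → a = B.tau

/-- The norm of a process: least length of a word leading weakly to a deadlock
(`⊤ = ∞` if there is none). -/
noncomputable def norm (α : B.Proc) : ℕ∞ :=
  sInf {n : ℕ∞ | ∃ w δ, B.WWord w α δ ∧ B.Deadlock δ ∧ (w.length : ℕ∞) = n}

/-- A normed description: every variable has finite norm. -/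
def Normed : Prop := ∀ X : B.V, B.norm {X} ≠ ⊤

/-- Silent norm-preserving steps `α →₀ β`. -/
def Step0 (α β : B.Proc) : Prop :=
  B.Step B.tau α β ∧ B.norm α = B.norm β

/-- `⇒₀`: reflexive–transitive closure of silent norm-preserving steps. -/
def WTau0 : B.Proc → B.Proc → Prop :=
  Relation.ReflTransGen B.Step0

/-- No two distinct variables are redundant. -/
def NoRedundantVars : Prop :=
  ∀ X Y : B.V, X ≠ Y → ¬ (B.WTau0 {X} {Y} ∧ B.WTau0 {Y} {X})

/-- A generator: a variable that can silently, norm-preservingly reproduce itself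
together with some nonempty rest. -/
def IsGenerator (X : B.V) : Prop :=
  ∃ α : B.Proc, α ≠ 0 ∧ B.WTau0 {X} ({X} + α)

/-- A pure variable cannot vanish along `⇒₀`. -/
def IsPure (X : B.V) : Prop :=
  ∀ α : B.Proc, B.WTau0 {X} α → X ∈ α

end BPP


inductive V16 : Type
  | X | Y | Z | A
deriving DecidableEq

instance instFintypeV16 : Fintype V16 :=
  ⟨{V16.X, V16.Y, V16.Z, V16.A}, by intro x; cases x <;> simp⟩

inductive A16 : Type
  | tau | a | b
deriving DecidableEq

instance instFintypeA16 : Fintype A16 :=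
  ⟨{A16.tau, A16.a, A16.b}, by intro x; cases x <;> simp⟩

/-- Rules: X →τ Y, X →τ XA, X →b Z, Y →b ε, Y →τ YA, Z →τ ε, Z →τ ZA,
A →τ ε, A →a ε. -/
def rules16 : List (V16 × A16 × Multiset V16) :=
  [(V16.X, A16.tau, {V16.Y}), (V16.X, A16.tau, {V16.X, V16.A}), (V16.X, A16.b, {V16.Z}),
   (V16.Y, A16.b, 0), (V16.Y, A16.tau, {V16.Y, V16.A}),
   (V16.Z, A16.tau, 0), (V16.Z, A16.tau, {V16.Z, V16.A}),
   (V16.A, A16.tau, 0), (V16.A, A16.a, 0)]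

def B16 : BPP :=
  { V := V16, Act := A16, finV := inferInstance, finAct := inferInstance,
    tau := A16.tau, T := {r | r ∈ rules16}, finT := rules16.finite_toSet }

set_option linter.constructorNameAsVariable false

namespace Aux16

def pA (k : ℕ) : Multiset V16 := Multiset.replicate k V16.A
def pXA (k : ℕ) : Multiset V16 := V16.X ::ₘ pA k
def pYA (k : ℕ) : Multiset V16 := V16.Y ::ₘ pA k
def pZA (k : ℕ) : Multiset V16 := V16.Z ::ₘ pA k

lemma pA_succ (k : ℕ) : pA (k+1) = V16.A ::ₘ pA k := by
  simp [pA, Multiset.replicate_succ]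

lemma pXA_succ (k : ℕ) : pXA (k+1) = V16.A ::ₘ pXA k := by
  rw [pXA, pA_succ, Multiset.cons_swap]; rfl

lemma pYA_succ (k : ℕ) : pYA (k+1) = V16.A ::ₘ pYA k := by
  rw [pYA, pA_succ, Multiset.cons_swap]; rfl

lemma pZA_succ (k : ℕ) : pZA (k+1) = V16.A ::ₘ pZA k := by
  rw [pZA, pA_succ, Multiset.cons_swap]; rfl

lemma memT_iff (r : V16 × A16 × Multiset V16) : r ∈ B16.T ↔ r ∈ rules16 := Iff.rfl

lemma mk_step {v : V16} {act : A16} {γ : Multiset V16} (h : (v, act, γ) ∈ rules16)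
    (δ : Multiset V16) : B16.Step act (v ::ₘ δ) (γ + δ) :=
  ⟨v, γ, δ, h, rfl, rfl⟩

-- specific step constructors
lemma stX_Y (i : ℕ) : B16.Step A16.tau (pXA i) (pYA i) := by
  have := mk_step (v := V16.X) (act := A16.tau) (γ := {V16.Y}) (by simp [rules16]) (pA i)
  simp [pXA, pYA, Multiset.singleton_add] at this; exact this

lemma stX_XA (i : ℕ) : B16.Step A16.tau (pXA i) (pXA (i+1)) := by
  have := mk_step (v := V16.X) (act := A16.tau) (γ := {V16.X, V16.A}) (by simp [rules16]) (pA i)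
  have e : ({V16.X, V16.A} : Multiset V16) + pA i = pXA (i+1) := by
    rw [pXA_succ, pXA]
    simp [Multiset.insert_eq_cons, Multiset.cons_add, Multiset.cons_swap]
  rw [← e]; exact this

lemma stX_Z (i : ℕ) : B16.Step A16.b (pXA i) (pZA i) := by
  have := mk_step (v := V16.X) (act := A16.b) (γ := {V16.Z}) (by simp [rules16]) (pA i)
  simp [pXA, pZA, Multiset.singleton_add] at this; exact this

lemma stY_e (j : ℕ) : B16.Step A16.b (pYA j) (pA j) := by
  have := mk_step (v := V16.Y) (act := A16.b) (γ := (0 : Multiset V16)) (by simp [rules16]) (pA j)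
  simp [pYA] at this; exact this

lemma stY_YA (j : ℕ) : B16.Step A16.tau (pYA j) (pYA (j+1)) := by
  have := mk_step (v := V16.Y) (act := A16.tau) (γ := {V16.Y, V16.A}) (by simp [rules16]) (pA j)
  have e : ({V16.Y, V16.A} : Multiset V16) + pA j = pYA (j+1) := by
    rw [pYA_succ, pYA]
    simp [Multiset.insert_eq_cons, Multiset.cons_add, Multiset.cons_swap]
  rw [← e]; exact this

lemma stZ_e (i : ℕ) : B16.Step A16.tau (pZA i) (pA i) := by
  have := mk_step (v := V16.Z) (act := A16.tau) (γ := (0 : Multiset V16)) (by simp [rules16]) (pA i)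
  simp [pZA] at this; exact this

lemma stZ_ZA (i : ℕ) : B16.Step A16.tau (pZA i) (pZA (i+1)) := by
  have := mk_step (v := V16.Z) (act := A16.tau) (γ := {V16.Z, V16.A}) (by simp [rules16]) (pA i)
  have e : ({V16.Z, V16.A} : Multiset V16) + pA i = pZA (i+1) := by
    rw [pZA_succ, pZA]
    simp [Multiset.insert_eq_cons, Multiset.cons_add, Multiset.cons_swap]
  rw [← e]; exact this

lemma stA_tau (δ : Multiset V16) : B16.Step A16.tau (V16.A ::ₘ δ) δ := by
  have := mk_step (v := V16.A) (act := A16.tau) (γ := (0 : Multiset V16)) (by simp [rules16]) δ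
  simpa using this

lemma stA_a (δ : Multiset V16) : B16.Step A16.a (V16.A ::ₘ δ) δ := by
  have := mk_step (v := V16.A) (act := A16.a) (γ := (0 : Multiset V16)) (by simp [rules16]) δ
  simpa using this


lemma wtau_refl (α : Multiset V16) : B16.WTau α α := Relation.ReflTransGen.refl

lemma wtau_up {f : ℕ → Multiset V16} (up : ∀ k, B16.Step A16.tau (f k) (f (k+1))) :
    ∀ j d, B16.WTau (f j) (f (j+d)) := by
  intro j d
  induction d with
  | zero => exact wtau_refl _
  | succ d ih => exact ih.tail (up (j+d))

lemma wtau_dn {f : ℕ → Multiset V16} (dn : ∀ k, B16.Step A16.tau (f (k+1)) (f k)) :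
    ∀ j d, B16.WTau (f (j+d)) (f j) := by
  intro j d
  induction d with
  | zero => exact wtau_refl _
  | succ d ih => exact Relation.ReflTransGen.head (dn (j+d)) ih

lemma wtau_all {f : ℕ → Multiset V16} (up : ∀ k, B16.Step A16.tau (f k) (f (k+1)))
    (dn : ∀ k, B16.Step A16.tau (f (k+1)) (f k)) (j j' : ℕ) : B16.WTau (f j) (f j') := by
  rcases Nat.le_total j j' with h | h
  · obtain ⟨d, rfl⟩ := Nat.exists_eq_add_of_le h
    exact wtau_up up j d
  · obtain ⟨d, rfl⟩ := Nat.exists_eq_add_of_le h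
    exact wtau_dn dn j' d

lemma wtauA {m m' : ℕ} (h : m' ≤ m) : B16.WTau (pA m) (pA m') := by
  obtain ⟨d, rfl⟩ := Nat.exists_eq_add_of_le h
  exact wtau_dn (f := pA) (fun k => by rw [pA_succ]; exact stA_tau _) m' d

lemma wtauX (i i' : ℕ) : B16.WTau (pXA i) (pXA i') :=
  wtau_all stX_XA (fun k => by rw [pXA_succ]; exact stA_tau _) i i'

lemma wtauY (j j' : ℕ) : B16.WTau (pYA j) (pYA j') :=
  wtau_all stY_YA (fun k => by rw [pYA_succ]; exact stA_tau _) j j'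

lemma wtauZ (i i' : ℕ) : B16.WTau (pZA i) (pZA i') :=
  wtau_all stZ_ZA (fun k => by rw [pZA_succ]; exact stA_tau _) i i'

lemma wtauXY (i j : ℕ) : B16.WTau (pXA i) (pYA j) :=
  (wtauX i j).tail (stX_Y j)

lemma wtauZA (i m : ℕ) : B16.WTau (pZA i) (pA m) :=
  (wtauZ i m).tail (stZ_e m)

-- weak step constructors
lemma wstep_of_wtau {α β : Multiset V16} (h : B16.WTau α β) : B16.WStep A16.tau α β :=
  Or.inl ⟨rfl, h⟩

lemma wstep_vis {act : A16} (hne : act ≠ A16.tau) {α γ δ β : Multiset V16}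
    (h1 : B16.WTau α γ) (h2 : B16.Step act γ δ) (h3 : B16.WTau δ β) : B16.WStep act α β :=
  Or.inr ⟨hne, γ, δ, h1, h2, h3⟩

lemma wsaA {m m' : ℕ} (h : m' < m) : B16.WStep A16.a (pA m) (pA m') :=
  wstep_vis (by decide) (wtauA h) (by rw [pA_succ]; exact stA_a _) (wtau_refl _)

lemma wsaX (i i' : ℕ) : B16.WStep A16.a (pXA i) (pXA i') :=
  wstep_vis (by decide) (wtauX i (i'+1)) (by rw [pXA_succ]; exact stA_a _) (wtau_refl _)

lemma wsaY (j j' : ℕ) : B16.WStep A16.a (pYA j) (pYA j') :=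
  wstep_vis (by decide) (wtauY j (j'+1)) (by rw [pYA_succ]; exact stA_a _) (wtau_refl _)

lemma wsaXY (i j' : ℕ) : B16.WStep A16.a (pXA i) (pYA j') :=
  wstep_vis (by decide) (wtauXY i (j'+1)) (by rw [pYA_succ]; exact stA_a _) (wtau_refl _)

lemma wsaZ (i i' : ℕ) : B16.WStep A16.a (pZA i) (pZA i') :=
  wstep_vis (by decide) (wtauZ i (i'+1)) (by rw [pZA_succ]; exact stA_a _) (wtau_refl _)

lemma wsaZA (i m : ℕ) : B16.WStep A16.a (pZA i) (pA m) :=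
  wstep_vis (by decide) (wtauZ i (m+1)) (by rw [pZA_succ]; exact stA_a _) (wtauZA m m)

lemma wsbY (j m : ℕ) : B16.WStep A16.b (pYA j) (pA m) :=
  wstep_vis (by decide) (wtauY j m) (stY_e m) (wtau_refl _)

lemma wsbXA (i m : ℕ) : B16.WStep A16.b (pXA i) (pA m) :=
  wstep_vis (by decide) (wtauXY i m) (stY_e m) (wtau_refl _)

lemma wsbXZ (i i' : ℕ) : B16.WStep A16.b (pXA i) (pZA i') :=
  wstep_vis (by decide) (wtauX i i') (stX_Z i') (wtau_refl _)


lemma pA_eq_cons {m : ℕ} {v : V16} {δ : Multiset V16} (h : pA m = v ::ₘ δ) :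
    v = V16.A ∧ ∃ m', m = m' + 1 ∧ δ = pA m' := by
  have hv : v = V16.A := by
    have : v ∈ pA m := h ▸ Multiset.mem_cons_self v δ
    exact Multiset.eq_of_mem_replicate this
  subst hv
  refine ⟨rfl, ?_⟩
  cases m with
  | zero => simp [pA] at h
  | succ m' =>
    rw [pA_succ] at h
    exact ⟨m', rfl, (Multiset.cons_inj_right _).mp h.symm⟩

lemma cons_pA_eq {w v : V16} {i : ℕ} {δ : Multiset V16} (_hw : w ≠ V16.A)
    (h : w ::ₘ pA i = v ::ₘ δ) :
    (v = w ∧ δ = pA i) ∨ (v = V16.A ∧ ∃ i', i = i' + 1 ∧ δ = w ::ₘ pA i') := by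
  rcases (Multiset.cons_eq_cons).mp h with ⟨h1, h2⟩ | ⟨hne, cs, h1, h2⟩
  · exact Or.inl ⟨h1.symm, h2.symm⟩
  · obtain ⟨hv, m', hm, hcs⟩ := pA_eq_cons h1
    exact Or.inr ⟨hv, m', hm, by rw [h2, hcs]⟩

lemma step_pA_dest {act : A16} {m : ℕ} {β : Multiset V16} (h : B16.Step act (pA m) β) :
    (act = A16.tau ∨ act = A16.a) ∧ ∃ m', m = m' + 1 ∧ β = pA m' := by
  obtain ⟨v, γ, δ, hT, hα, hβ⟩ := h
  change (@Prod.mk V16 (A16 × Multiset V16) v (@Prod.mk A16 (Multiset V16) act γ)) ∈ rules16 at hT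
  change β = HAdd.hAdd (α := Multiset V16) (β := Multiset V16) γ δ at hβ
  simp only [rules16, List.mem_cons, List.mem_singleton, Prod.mk.injEq,
    List.not_mem_nil, or_false] at hT
  obtain ⟨hv, m', hm, hδ⟩ := pA_eq_cons hα
  subst hv hδ
  rcases hT with ⟨h1,h2,h3⟩|⟨h1,h2,h3⟩|⟨h1,h2,h3⟩|⟨h1,h2,h3⟩|⟨h1,h2,h3⟩|⟨h1,h2,h3⟩|⟨h1,h2,h3⟩|⟨h1,h2,h3⟩|⟨h1,h2,h3⟩
  · exact ⟨by simp, m', hm, by rw [hβ]; simp⟩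
  · exact ⟨by simp, m', hm, by rw [hβ]; simp⟩

lemma step_pXA_dest {act : A16} {i : ℕ} {β : Multiset V16} (h : B16.Step act (pXA i) β) :
    (act = A16.tau ∧ (β = pYA i ∨ β = pXA (i+1) ∨ ∃ i', i = i' + 1 ∧ β = pXA i'))
    ∨ (act = A16.a ∧ ∃ i', i = i' + 1 ∧ β = pXA i')
    ∨ (act = A16.b ∧ β = pZA i) := by
  obtain ⟨v, γ, δ, hT, hα, hβ⟩ := h
  change (@Prod.mk V16 (A16 × Multiset V16) v (@Prod.mk A16 (Multiset V16) act γ)) ∈ rules16 at hT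
  change β = HAdd.hAdd (α := Multiset V16) (β := Multiset V16) γ δ at hβ
  simp only [rules16, List.mem_cons, List.mem_singleton, Prod.mk.injEq,
    List.not_mem_nil, or_false] at hT
  rcases cons_pA_eq (fun hc => V16.noConfusion hc) hα with ⟨hv, hδ⟩ | ⟨hv, k', hk, hδ⟩
  · subst hv hδ
    rcases hT with ⟨h1,h2,h3⟩|⟨h1,h2,h3⟩|⟨h1,h2,h3⟩|⟨h1,h2,h3⟩|⟨h1,h2,h3⟩|⟨h1,h2,h3⟩|⟨h1,h2,h3⟩|⟨h1,h2,h3⟩|⟨h1,h2,h3⟩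
    · exact Or.inl ⟨rfl, Or.inl (by rw [hβ]; simp [pYA, Multiset.singleton_add])⟩
    · refine Or.inl ⟨rfl, Or.inr (Or.inl ?_)⟩
      rw [hβ, pXA_succ, pXA]
      simp [Multiset.insert_eq_cons, Multiset.cons_add, Multiset.cons_swap]
    · exact Or.inr (Or.inr ⟨rfl, by rw [hβ]; simp [pZA, Multiset.singleton_add]⟩)
  · subst hv hδ
    rcases hT with ⟨h1,h2,h3⟩|⟨h1,h2,h3⟩|⟨h1,h2,h3⟩|⟨h1,h2,h3⟩|⟨h1,h2,h3⟩|⟨h1,h2,h3⟩|⟨h1,h2,h3⟩|⟨h1,h2,h3⟩|⟨h1,h2,h3⟩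
    · exact Or.inl ⟨rfl, Or.inr (Or.inr ⟨k', hk, by rw [hβ]; simp [pXA]⟩)⟩
    · exact Or.inr (Or.inl ⟨rfl, k', hk, by rw [hβ]; simp [pXA]⟩)

lemma step_pYA_dest {act : A16} {j : ℕ} {β : Multiset V16} (h : B16.Step act (pYA j) β) :
    (act = A16.tau ∧ (β = pYA (j+1) ∨ ∃ j', j = j' + 1 ∧ β = pYA j'))
    ∨ (act = A16.a ∧ ∃ j', j = j' + 1 ∧ β = pYA j')
    ∨ (act = A16.b ∧ β = pA j) := by
  obtain ⟨v, γ, δ, hT, hα, hβ⟩ := h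
  change (@Prod.mk V16 (A16 × Multiset V16) v (@Prod.mk A16 (Multiset V16) act γ)) ∈ rules16 at hT
  change β = HAdd.hAdd (α := Multiset V16) (β := Multiset V16) γ δ at hβ
  simp only [rules16, List.mem_cons, List.mem_singleton, Prod.mk.injEq,
    List.not_mem_nil, or_false] at hT
  rcases cons_pA_eq (fun hc => V16.noConfusion hc) hα with ⟨hv, hδ⟩ | ⟨hv, k', hk, hδ⟩
  · subst hv hδ
    rcases hT with ⟨h1,h2,h3⟩|⟨h1,h2,h3⟩|⟨h1,h2,h3⟩|⟨h1,h2,h3⟩|⟨h1,h2,h3⟩|⟨h1,h2,h3⟩|⟨h1,h2,h3⟩|⟨h1,h2,h3⟩|⟨h1,h2,h3⟩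
    · exact Or.inr (Or.inr ⟨rfl, by rw [hβ]; simp [pYA, pA]⟩)
    · refine Or.inl ⟨rfl, Or.inl ?_⟩
      rw [hβ, pYA_succ, pYA]
      simp [Multiset.insert_eq_cons, Multiset.cons_add, Multiset.cons_swap]
  · subst hv hδ
    rcases hT with ⟨h1,h2,h3⟩|⟨h1,h2,h3⟩|⟨h1,h2,h3⟩|⟨h1,h2,h3⟩|⟨h1,h2,h3⟩|⟨h1,h2,h3⟩|⟨h1,h2,h3⟩|⟨h1,h2,h3⟩|⟨h1,h2,h3⟩
    · exact Or.inl ⟨rfl, Or.inr ⟨k', hk, by rw [hβ]; simp [pYA]⟩⟩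
    · exact Or.inr (Or.inl ⟨rfl, k', hk, by rw [hβ]; simp [pYA]⟩)

lemma step_pZA_dest {act : A16} {i : ℕ} {β : Multiset V16} (h : B16.Step act (pZA i) β) :
    (act = A16.tau ∧ (β = pA i ∨ β = pZA (i+1) ∨ ∃ i', i = i' + 1 ∧ β = pZA i'))
    ∨ (act = A16.a ∧ ∃ i', i = i' + 1 ∧ β = pZA i') := by
  obtain ⟨v, γ, δ, hT, hα, hβ⟩ := h
  change (@Prod.mk V16 (A16 × Multiset V16) v (@Prod.mk A16 (Multiset V16) act γ)) ∈ rules16 at hT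
  change β = HAdd.hAdd (α := Multiset V16) (β := Multiset V16) γ δ at hβ
  simp only [rules16, List.mem_cons, List.mem_singleton, Prod.mk.injEq,
    List.not_mem_nil, or_false] at hT
  rcases cons_pA_eq (fun hc => V16.noConfusion hc) hα with ⟨hv, hδ⟩ | ⟨hv, k', hk, hδ⟩
  · subst hv hδ
    rcases hT with ⟨h1,h2,h3⟩|⟨h1,h2,h3⟩|⟨h1,h2,h3⟩|⟨h1,h2,h3⟩|⟨h1,h2,h3⟩|⟨h1,h2,h3⟩|⟨h1,h2,h3⟩|⟨h1,h2,h3⟩|⟨h1,h2,h3⟩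
    · exact Or.inl ⟨rfl, Or.inl (by rw [hβ]; simp [pZA, pA])⟩
    · refine Or.inl ⟨rfl, Or.inr (Or.inl ?_)⟩
      rw [hβ, pZA_succ, pZA]
      simp [Multiset.insert_eq_cons, Multiset.cons_add, Multiset.cons_swap]
  · subst hv hδ
    rcases hT with ⟨h1,h2,h3⟩|⟨h1,h2,h3⟩|⟨h1,h2,h3⟩|⟨h1,h2,h3⟩|⟨h1,h2,h3⟩|⟨h1,h2,h3⟩|⟨h1,h2,h3⟩|⟨h1,h2,h3⟩|⟨h1,h2,h3⟩
    · exact Or.inl ⟨rfl, Or.inr (Or.inr ⟨k', hk, by rw [hβ]; simp [pZA]⟩)⟩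
    · exact Or.inr ⟨rfl, k', hk, by rw [hβ]; simp [pZA]⟩


def inS1 (β : Multiset V16) : Prop := (∃ i, β = pXA i) ∨ (∃ j, β = pYA j)
def inS2 (β : Multiset V16) : Prop := (∃ i, β = pZA i) ∨ (∃ m, β = pA m)
def inYA (β : Multiset V16) : Prop := ∃ j, β = pYA j

lemma tau_ne_a : A16.tau ≠ A16.a := by intro h; cases h
lemma tau_ne_b : A16.tau ≠ A16.b := by intro h; cases h
lemma a_ne_tau : A16.a ≠ B16.tau := fun h => A16.noConfusion h
lemma b_ne_tau : A16.b ≠ B16.tau := fun h => A16.noConfusion h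
lemma tau_ne_a' : B16.tau ≠ A16.a := fun h => A16.noConfusion h
lemma tau_ne_b' : B16.tau ≠ A16.b := fun h => A16.noConfusion h

lemma wtau_inS1 {α β : Multiset V16} (h : B16.WTau α β) (hα : inS1 α) : inS1 β := by
  induction h with
  | refl => exact hα
  | tail _ hs ih =>
    rcases ih with ⟨i, rfl⟩ | ⟨j, rfl⟩
    · rcases step_pXA_dest hs with ⟨_, hc⟩ | ⟨he, _⟩ | ⟨he, _⟩
      · rcases hc with rfl | rfl | ⟨i', _, rfl⟩
        · exact Or.inr ⟨i, rfl⟩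
        · exact Or.inl ⟨i+1, rfl⟩
        · exact Or.inl ⟨i', rfl⟩
      · exact absurd he tau_ne_a'
      · exact absurd he tau_ne_b'
    · rcases step_pYA_dest hs with ⟨_, hc⟩ | ⟨he, _⟩ | ⟨he, _⟩
      · rcases hc with rfl | ⟨j', _, rfl⟩
        · exact Or.inr ⟨j+1, rfl⟩
        · exact Or.inr ⟨j', rfl⟩
      · exact absurd he tau_ne_a'
      · exact absurd he tau_ne_b'

lemma wtau_inYA {α β : Multiset V16} (h : B16.WTau α β) (hα : inYA α) : inYA β := by
  induction h with
  | refl => exact hα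
  | tail _ hs ih =>
    obtain ⟨j, rfl⟩ := ih
    rcases step_pYA_dest hs with ⟨_, hc⟩ | ⟨he, _⟩ | ⟨he, _⟩
    · rcases hc with rfl | ⟨j', _, rfl⟩
      · exact ⟨j+1, rfl⟩
      · exact ⟨j', rfl⟩
    · exact absurd he tau_ne_a'
    · exact absurd he tau_ne_b'

lemma wtau_inS2 {α β : Multiset V16} (h : B16.WTau α β) (hα : inS2 α) : inS2 β := by
  induction h with
  | refl => exact hα
  | tail _ hs ih =>
    rcases ih with ⟨i, rfl⟩ | ⟨m, rfl⟩
    · rcases step_pZA_dest hs with ⟨_, hc⟩ | ⟨he, _⟩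
      · rcases hc with rfl | rfl | ⟨i', _, rfl⟩
        · exact Or.inr ⟨i, rfl⟩
        · exact Or.inl ⟨i+1, rfl⟩
        · exact Or.inl ⟨i', rfl⟩
      · exact absurd he tau_ne_a'
    · obtain ⟨_, m', _, rfl⟩ := step_pA_dest hs
      exact Or.inr ⟨m', rfl⟩

lemma wtau_pA {α β : Multiset V16} (h : B16.WTau α β) :
    ∀ m, α = pA m → ∃ m' ≤ m, β = pA m' := by
  induction h with
  | refl => exact fun m hm => ⟨m, le_refl m, hm⟩
  | tail _ hs ih =>
    intro m hm
    obtain ⟨k, hk, rfl⟩ := ih m hm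
    obtain ⟨_, m', rfl, rfl⟩ := step_pA_dest hs
    exact ⟨m', by omega, rfl⟩

-- weak-step destructors per class
lemma wstep_inS1_tau {α β : Multiset V16} (h : B16.WStep A16.tau α β) (hα : inS1 α) :
    inS1 β := by
  rcases h with ⟨_, ht⟩ | ⟨hne, _⟩
  · exact wtau_inS1 ht hα
  · exact absurd rfl hne

lemma wstep_inS1_a {α β : Multiset V16} (h : B16.WStep A16.a α β) (hα : inS1 α) :
    inS1 β := by
  rcases h with ⟨he, _⟩ | ⟨_, γ, δ, h1, h2, h3⟩
  · exact absurd he a_ne_tau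
  · have hγ := wtau_inS1 h1 hα
    have hδ : inS1 δ := by
      rcases hγ with ⟨i, rfl⟩ | ⟨j, rfl⟩
      · rcases step_pXA_dest h2 with ⟨he, _⟩ | ⟨_, i', _, rfl⟩ | ⟨he, _⟩
        · exact absurd he a_ne_tau
        · exact Or.inl ⟨i', rfl⟩
        · exact absurd he (by intro hc; cases hc)
      · rcases step_pYA_dest h2 with ⟨he, _⟩ | ⟨_, j', _, rfl⟩ | ⟨he, _⟩
        · exact absurd he a_ne_tau
        · exact Or.inr ⟨j', rfl⟩
        · exact absurd he (by intro hc; cases hc)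
    exact wtau_inS1 h3 hδ

lemma wstep_inS1_b {α β : Multiset V16} (h : B16.WStep A16.b α β) (hα : inS1 α) :
    inS2 β := by
  rcases h with ⟨he, _⟩ | ⟨_, γ, δ, h1, h2, h3⟩
  · exact absurd he b_ne_tau
  · have hγ := wtau_inS1 h1 hα
    have hδ : inS2 δ := by
      rcases hγ with ⟨i, rfl⟩ | ⟨j, rfl⟩
      · rcases step_pXA_dest h2 with ⟨he, _⟩ | ⟨he, _⟩ | ⟨_, rfl⟩
        · exact absurd he b_ne_tau
        · exact absurd he (by intro hc; cases hc)
        · exact Or.inl ⟨i, rfl⟩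
      · rcases step_pYA_dest h2 with ⟨he, _⟩ | ⟨he, _⟩ | ⟨_, rfl⟩
        · exact absurd he b_ne_tau
        · exact absurd he (by intro hc; cases hc)
        · exact Or.inr ⟨j, rfl⟩
    exact wtau_inS2 h3 hδ

lemma wstep_inYA_tau {α β : Multiset V16} (h : B16.WStep A16.tau α β) (hα : inYA α) :
    inYA β := by
  rcases h with ⟨_, ht⟩ | ⟨hne, _⟩
  · exact wtau_inYA ht hα
  · exact absurd rfl hne

lemma wstep_inYA_a {α β : Multiset V16} (h : B16.WStep A16.a α β) (hα : inYA α) :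
    inYA β := by
  rcases h with ⟨he, _⟩ | ⟨_, γ, δ, h1, h2, h3⟩
  · exact absurd he a_ne_tau
  · obtain ⟨j, rfl⟩ := wtau_inYA h1 hα
    rcases step_pYA_dest h2 with ⟨he, _⟩ | ⟨_, j', _, rfl⟩ | ⟨he, _⟩
    · exact absurd he a_ne_tau
    · exact wtau_inYA h3 ⟨j', rfl⟩
    · exact absurd he (by intro hc; cases hc)

lemma wstep_inYA_b {α β : Multiset V16} (h : B16.WStep A16.b α β) (hα : inYA α) :
    ∃ m, β = pA m := by
  rcases h with ⟨he, _⟩ | ⟨_, γ, δ, h1, h2, h3⟩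
  · exact absurd he b_ne_tau
  · obtain ⟨j, rfl⟩ := wtau_inYA h1 hα
    rcases step_pYA_dest h2 with ⟨he, _⟩ | ⟨he, _⟩ | ⟨_, rfl⟩
    · exact absurd he b_ne_tau
    · exact absurd he (by intro hc; cases hc)
    · obtain ⟨m', _, rfl⟩ := wtau_pA h3 j rfl
      exact ⟨m', rfl⟩

lemma wstep_inS2_tau {α β : Multiset V16} (h : B16.WStep A16.tau α β) (hα : inS2 α) :
    inS2 β := by
  rcases h with ⟨_, ht⟩ | ⟨hne, _⟩
  · exact wtau_inS2 ht hα
  · exact absurd rfl hne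

lemma wstep_inS2_a {α β : Multiset V16} (h : B16.WStep A16.a α β) (hα : inS2 α) :
    inS2 β := by
  rcases h with ⟨he, _⟩ | ⟨_, γ, δ, h1, h2, h3⟩
  · exact absurd he a_ne_tau
  · have hγ := wtau_inS2 h1 hα
    have hδ : inS2 δ := by
      rcases hγ with ⟨i, rfl⟩ | ⟨m, rfl⟩
      · rcases step_pZA_dest h2 with ⟨he, _⟩ | ⟨_, i', _, rfl⟩
        · exact absurd he a_ne_tau
        · exact Or.inl ⟨i', rfl⟩
      · obtain ⟨_, m', _, rfl⟩ := step_pA_dest h2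
        exact Or.inr ⟨m', rfl⟩
    exact wtau_inS2 h3 hδ

lemma wstep_inS2_b {α β : Multiset V16} (h : B16.WStep A16.b α β) (hα : inS2 α) :
    False := by
  rcases h with ⟨he, _⟩ | ⟨_, γ, δ, h1, h2, h3⟩
  · exact absurd he b_ne_tau
  · have hγ := wtau_inS2 h1 hα
    rcases hγ with ⟨i, rfl⟩ | ⟨m, rfl⟩
    · rcases step_pZA_dest h2 with ⟨he, _⟩ | ⟨he, _⟩
      · exact absurd he b_ne_tau
      · exact absurd he (by intro hc; cases hc)
    · rcases (step_pA_dest h2).1 with he | he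
      · exact absurd he b_ne_tau
      · exact absurd he (by intro hc; cases hc)

lemma wstep_pA_tau {m : ℕ} {β : Multiset V16} (h : B16.WStep A16.tau (pA m) β) :
    ∃ m' ≤ m, β = pA m' := by
  rcases h with ⟨_, ht⟩ | ⟨hne, _⟩
  · exact wtau_pA ht m rfl
  · exact absurd rfl hne

lemma wstep_pA_a {m : ℕ} {β : Multiset V16} (h : B16.WStep A16.a (pA m) β) :
    ∃ m' < m, β = pA m' := by
  rcases h with ⟨he, _⟩ | ⟨_, γ, δ, h1, h2, h3⟩
  · exact absurd he a_ne_tau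
  · obtain ⟨k, hk, rfl⟩ := wtau_pA h1 m rfl
    obtain ⟨_, k', rfl, rfl⟩ := step_pA_dest h2
    obtain ⟨m', hm', rfl⟩ := wtau_pA h3 k' rfl
    exact ⟨m', by omega, rfl⟩

lemma wstep_pA_b {m : ℕ} {β : Multiset V16} (h : B16.WStep A16.b (pA m) β) : False :=
  wstep_inS2_b h (Or.inr ⟨m, rfl⟩)


def Rel (n : ℕ) (α β : Multiset V16) : Prop :=
  α = β
  ∨ (∃ i j, (α = pXA i ∧ β = pYA j) ∨ (α = pYA j ∧ β = pXA i))
  ∨ (∃ i m, n ≤ m ∧ ((α = pZA i ∧ β = pA m) ∨ (α = pA m ∧ β = pZA i)))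
  ∨ (∃ p q, n ≤ p ∧ n ≤ q ∧ α = pA p ∧ β = pA q)

lemma rel_symm {n : ℕ} {α β : Multiset V16} (h : Rel n α β) : Rel n β α := by
  rcases h with rfl | ⟨i, j, ⟨h1, h2⟩ | ⟨h1, h2⟩⟩ | ⟨i, m, hm, ⟨h1, h2⟩ | ⟨h1, h2⟩⟩ |
    ⟨p, q, hp, hq, h1, h2⟩
  · exact Or.inl rfl
  · exact Or.inr (Or.inl ⟨i, j, Or.inr ⟨h2, h1⟩⟩)
  · exact Or.inr (Or.inl ⟨i, j, Or.inl ⟨h2, h1⟩⟩)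
  · exact Or.inr (Or.inr (Or.inl ⟨i, m, hm, Or.inr ⟨h2, h1⟩⟩))
  · exact Or.inr (Or.inr (Or.inl ⟨i, m, hm, Or.inl ⟨h2, h1⟩⟩))
  · exact Or.inr (Or.inr (Or.inr ⟨q, p, hq, hp, h2, h1⟩))

lemma rel_step {n : ℕ} {α β : Multiset V16} (hrel : Rel (n+1) α β) :
    ∀ act α', B16.WStep act α α' → ∃ β', B16.WStep act β β' ∧ Rel n α' β' := by
  intro act α' hw
  rcases hrel with rfl | ⟨i, j, ⟨rfl, rfl⟩ | ⟨rfl, rfl⟩⟩ |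
    ⟨i, m, hm, ⟨rfl, rfl⟩ | ⟨rfl, rfl⟩⟩ | ⟨p, q, hp, hq, rfl, rfl⟩
  · exact ⟨α', hw, Or.inl rfl⟩
  -- (pXA i, pYA j)
  · cases act with
    | tau =>
      rcases wstep_inS1_tau hw (Or.inl ⟨i, rfl⟩) with ⟨i', rfl⟩ | ⟨j', rfl⟩
      · exact ⟨pYA j, wstep_of_wtau (wtau_refl _), Or.inr (Or.inl ⟨i', j, Or.inl ⟨rfl, rfl⟩⟩)⟩
      · exact ⟨pYA j', wstep_of_wtau (wtauY j j'), Or.inl rfl⟩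
    | a =>
      rcases wstep_inS1_a hw (Or.inl ⟨i, rfl⟩) with ⟨i', rfl⟩ | ⟨j', rfl⟩
      · exact ⟨pYA j, wsaY j j, Or.inr (Or.inl ⟨i', j, Or.inl ⟨rfl, rfl⟩⟩)⟩
      · exact ⟨pYA j', wsaY j j', Or.inl rfl⟩
    | b =>
      rcases wstep_inS1_b hw (Or.inl ⟨i, rfl⟩) with ⟨i', rfl⟩ | ⟨m', rfl⟩
      · exact ⟨pA n, wsbY j n, Or.inr (Or.inr (Or.inl ⟨i', n, le_refl n, Or.inl ⟨rfl, rfl⟩⟩))⟩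
      · exact ⟨pA m', wsbY j m', Or.inl rfl⟩
  -- (pYA j, pXA i)
  · cases act with
    | tau =>
      obtain ⟨j', rfl⟩ := wstep_inYA_tau hw ⟨j, rfl⟩
      exact ⟨pYA j', wstep_of_wtau (wtauXY i j'), Or.inl rfl⟩
    | a =>
      obtain ⟨j', rfl⟩ := wstep_inYA_a hw ⟨j, rfl⟩
      exact ⟨pYA j', wsaXY i j', Or.inl rfl⟩
    | b =>
      obtain ⟨m', rfl⟩ := wstep_inYA_b hw ⟨j, rfl⟩
      exact ⟨pA m', wsbXA i m', Or.inl rfl⟩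
  -- (pZA i, pA m), n+1 ≤ m
  · cases act with
    | tau =>
      rcases wstep_inS2_tau hw (Or.inl ⟨i, rfl⟩) with ⟨i', rfl⟩ | ⟨m'', rfl⟩
      · exact ⟨pA m, wstep_of_wtau (wtau_refl _),
          Or.inr (Or.inr (Or.inl ⟨i', m, by omega, Or.inl ⟨rfl, rfl⟩⟩))⟩
      · rcases le_or_gt m'' m with hle | hlt
        · exact ⟨pA m'', wstep_of_wtau (wtauA hle), Or.inl rfl⟩
        · exact ⟨pA m, wstep_of_wtau (wtau_refl _),
            Or.inr (Or.inr (Or.inr ⟨m'', m, by omega, by omega, rfl, rfl⟩))⟩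
    | a =>
      rcases wstep_inS2_a hw (Or.inl ⟨i, rfl⟩) with ⟨i', rfl⟩ | ⟨m'', rfl⟩
      · exact ⟨pA n, wsaA (by omega), Or.inr (Or.inr (Or.inl ⟨i', n, le_refl n,
          Or.inl ⟨rfl, rfl⟩⟩))⟩
      · rcases lt_or_ge m'' m with hlt | hle
        · exact ⟨pA m'', wsaA hlt, Or.inl rfl⟩
        · exact ⟨pA n, wsaA (by omega),
            Or.inr (Or.inr (Or.inr ⟨m'', n, by omega, le_refl n, rfl, rfl⟩))⟩
    | b => exact absurd (wstep_inS2_b hw (Or.inl ⟨i, rfl⟩)) not_false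
  -- (pA m, pZA i), n+1 ≤ m
  · cases act with
    | tau =>
      obtain ⟨m', hle, rfl⟩ := wstep_pA_tau hw
      rcases le_or_gt n m' with hn | hn
      · exact ⟨pZA i, wstep_of_wtau (wtau_refl _),
          Or.inr (Or.inr (Or.inl ⟨i, m', hn, Or.inr ⟨rfl, rfl⟩⟩))⟩
      · exact ⟨pA m', wstep_of_wtau (wtauZA i m'), Or.inl rfl⟩
    | a =>
      obtain ⟨m', hlt, rfl⟩ := wstep_pA_a hw
      rcases le_or_gt n m' with hn | hn
      · exact ⟨pZA i, wsaZ i i, Or.inr (Or.inr (Or.inl ⟨i, m', hn, Or.inr ⟨rfl, rfl⟩⟩))⟩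
      · exact ⟨pA m', wsaZA i m', Or.inl rfl⟩
    | b => exact absurd (wstep_pA_b hw) not_false
  -- (pA p, pA q), both ≥ n+1
  · cases act with
    | tau =>
      obtain ⟨p', hle, rfl⟩ := wstep_pA_tau hw
      rcases le_or_gt p' q with h | h
      · exact ⟨pA p', wstep_of_wtau (wtauA h), Or.inl rfl⟩
      · exact ⟨pA q, wstep_of_wtau (wtau_refl _),
          Or.inr (Or.inr (Or.inr ⟨p', q, by omega, by omega, rfl, rfl⟩))⟩
    | a =>
      obtain ⟨p', hlt, rfl⟩ := wstep_pA_a hw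
      rcases lt_or_ge p' q with h | h
      · exact ⟨pA p', wsaA h, Or.inl rfl⟩
      · exact ⟨pA n, wsaA (by omega),
          Or.inr (Or.inr (Or.inr ⟨p', n, by omega, le_refl n, rfl, rfl⟩))⟩
    | b => exact absurd (wstep_pA_b hw) not_false

lemma refLL_of_rel {n : ℕ} {α β : Multiset V16} (h : Rel (n+1) α β) :
    B16.RefLL (Rel n) α β := by
  refine ⟨fun act α' hw => rel_step h act α' hw, fun act β' hw => ?_⟩
  obtain ⟨α', hw', hr⟩ := rel_step (rel_symm h) act β' hw
  exact ⟨α', hw', rel_symm hr⟩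

lemma refLL_mono {R S : B16.Proc → B16.Proc → Prop} (hRS : ∀ x y, R x y → S x y)
    {α β : Multiset V16} (h : B16.RefLL R α β) : B16.RefLL S α β := by
  obtain ⟨h1, h2⟩ := h
  refine ⟨fun a α' hw => ?_, fun a β' hw => ?_⟩
  · obtain ⟨β', hw', hr⟩ := h1 a α' hw; exact ⟨β', hw', hRS _ _ hr⟩
  · obtain ⟨α', hw', hr⟩ := h2 a β' hw; exact ⟨α', hw', hRS _ _ hr⟩

universe uu

lemma approx_nat (n : ℕ) (α β : Multiset V16) (h : Rel n α β) :
    B16.Approx B16.RefLL (n : Ordinal.{uu}) α β := by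
  induction n generalizing α β with
  | zero =>
    show Ordinal.limitRecOn (motive := fun _ => B16.Proc → B16.Proc → Prop) _ _ _ _ α β
    rw [Nat.cast_zero, Ordinal.limitRecOn_zero]
    trivial
  | succ n ih =>
    show Ordinal.limitRecOn (motive := fun _ => B16.Proc → B16.Proc → Prop) _ _ _ _ α β
    have e : ((n+1 : ℕ) : Ordinal.{uu}) = Order.succ (n : Ordinal.{uu}) := by
      push_cast
      rw [Ordinal.add_one_eq_succ]
    rw [e, Ordinal.limitRecOn_succ]
    exact refLL_mono (fun x y hxy => ih x y hxy) (refLL_of_rel h)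

lemma approx_omega {α β : Multiset V16} (h : ∀ n : ℕ, B16.Approx B16.RefLL (n : Ordinal.{uu}) α β) :
    B16.Approx B16.RefLL Ordinal.omega0.{uu} α β := by
  show Ordinal.limitRecOn (motive := fun _ => B16.Proc → B16.Proc → Prop) _ _ _ _ α β
  rw [Ordinal.limitRecOn_limit _ _ _ _ Ordinal.isSuccLimit_omega0]
  intro i hi
  obtain ⟨k, rfl⟩ := Ordinal.lt_omega0.mp hi
  exact h k

lemma not_R_Z_pA {R : B16.Proc → B16.Proc → Prop} (hR : B16.IsWeakBisim R) :
    ∀ k, ¬ R (pZA 0) (pA k) := by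
  intro k
  induction k using Nat.strong_induction_on with
  | _ k ih =>
    intro hRk
    obtain ⟨β1, hw1, hR1⟩ := hR.2 _ _ hRk B16.tau (pZA 1) (stZ_ZA 0)
    obtain ⟨k1, hk1, rfl⟩ := wstep_pA_tau hw1
    have hstep : B16.Step A16.a (pZA 1) (pZA 0) := by
      rw [pZA_succ]; exact stA_a (pZA 0)
    obtain ⟨β2, hw2, hR2⟩ := hR.2 _ _ hR1 A16.a (pZA 0) hstep
    obtain ⟨k2, hk2, rfl⟩ := wstep_pA_a hw2
    exact ih k2 (by omega) hR2

lemma eX : ({V16.X} : Multiset V16) = pXA 0 := rfl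
lemma eY : ({V16.Y} : Multiset V16) = pYA 0 := rfl
lemma eZ : ({V16.Z} : Multiset V16) = pZA 0 := rfl

lemma not_wbisim : ¬ B16.WBisim ({V16.X} : Multiset V16) ({V16.Y} : Multiset V16) := by
  rintro ⟨R, hR, hXY⟩
  rw [eX, eY] at hXY
  obtain ⟨β', hwb, hRZ⟩ := hR.2 _ _ hXY A16.b (pZA 0) (stX_Z 0)
  obtain ⟨m, rfl⟩ := wstep_inYA_b hwb ⟨0, rfl⟩
  exact not_R_Z_pA hR m hRZ

lemma approx_XY : B16.Approx B16.RefLL Ordinal.omega0.{uu}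
    ({V16.X} : Multiset V16) ({V16.Y} : Multiset V16) := by
  rw [eX, eY]
  exact approx_omega.{uu} fun n => approx_nat.{uu} n _ _
    (Or.inr (Or.inl ⟨0, 0, Or.inl ⟨rfl, rfl⟩⟩))


end Aux16

/-- `X ≈ᴸ_ω Y` but `X ≉ Y`; hence long-long approximants do not
stabilize at level `ω`. -/
theorem ll_approximants_not_stable_at_omega :
    B16.Approx B16.RefLL Ordinal.omega0 ({V16.X} : Multiset V16) ({V16.Y} : Multiset V16) ∧
    ¬ B16.WBisim ({V16.X} : Multiset V16) ({V16.Y} : Multiset V16) ∧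
    ¬ (∀ α β : B16.Proc, B16.WBisim α β ↔ B16.Approx B16.RefLL Ordinal.omega0 α β) := by
  refine ⟨Aux16.approx_XY, Aux16.not_wbisim, fun h => Aux16.not_wbisim ((h _ _).mpr Aux16.approx_XY)⟩
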